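/- Let p ∈ {5,7} and let θ_{n,p} denote the level-n p-adic Mazur–Tate element attached to the boundary symbol of the Eisenstein series E_p, where E_5 = E_{2,ω_5²,𝟙} and E_7 = E_{2,ω_7⁴,𝟙}. Then for every n ≥ 1, λ(θ_{n,p}) = p^n − 1. -/

import Mathlib

noncomputable section

open scoped Classical

/-- The projective line over `ℚ`, realized as the projectivization of `ℚ²`. -/
abbrev P1 : Type := Projectivization ℚ (Fin 2 → ℚ)

/-- The point of `P¹(ℚ)` corresponding to a rational number `x` (the class of `(x, 1)`). -/
def ratPt (x : ℚ) : P1 :=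
  Projectivization.mk ℚ ![x, 1] (fun h => by simpa using congrFun h 1)

/-- The point `∞ ∈ P¹(ℚ)` (the class of `(1, 0)`). -/
def inftyPt : P1 :=
  Projectivization.mk ℚ ![1, 0] (fun h => by simpa using congrFun h 0)

lemma mulVecLin_injective {g : Matrix (Fin 2) (Fin 2) ℚ} (hg : g.det ≠ 0) :
    Function.Injective g.mulVecLin := by
  intro x y hxy
  have h1 := congrArg g⁻¹.mulVec hxy
  simpa only [Matrix.mulVecLin_apply, Matrix.mulVec_mulVec,
    Matrix.nonsing_inv_mul g (isUnit_iff_ne_zero.2 hg), Matrix.one_mulVec] using h1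

/-- The action of an integer matrix with nonzero determinant on `P¹(ℚ)` by linear fractional
transformations (acting on column vectors); singular matrices act as the identity (junk). -/
def actP1 (g : Matrix (Fin 2) (Fin 2) ℤ) : P1 → P1 :=
  if hg : (g.map ((↑) : ℤ → ℚ)).det ≠ 0 then
    Projectivization.map (g.map ((↑) : ℤ → ℚ)).mulVecLin (mulVecLin_injective hg)
  else id

/-- The group `Δ` of divisors on `P¹(ℚ)`. -/
abbrev Dvs : Type := P1 →₀ ℤ

/-- The degree map on divisors. -/
def deg : Dvs →+ ℤ := Finsupp.liftAddHom fun _ => AddMonoidHom.id ℤ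

/-- The group `Δ⁰` of degree-zero divisors on `P¹(ℚ)`. -/
abbrev Dvs0 : Type := deg.ker

/-- The action of an integer matrix on divisors. -/
def divAct (g : Matrix (Fin 2) (Fin 2) ℤ) : Dvs →+ Dvs :=
  Finsupp.mapDomain.addMonoidHom (actP1 g)

lemma deg_divAct (g : Matrix (Fin 2) (Fin 2) ℤ) (D : Dvs) :
    deg (divAct g D) = deg D := by
  have h : deg.comp (divAct g) = deg := by
    apply Finsupp.addHom_ext
    intro x m
    simp [divAct, deg, Finsupp.mapDomain.addMonoidHom_apply, Finsupp.mapDomain_single,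
      Finsupp.liftAddHom_apply, Finsupp.sum_single_index]
  exact DFunLike.congr_fun h D

/-- The action of an integer matrix on degree-zero divisors. -/
def div0Act (g : Matrix (Fin 2) (Fin 2) ℤ) : Dvs0 →+ Dvs0 :=
  AddMonoidHom.mk' (fun D => ⟨divAct g D.1, by
      have hD := D.2
      rw [AddMonoidHom.mem_ker] at hD ⊢
      rw [deg_divAct]; exact hD⟩)
    (fun D E => by
      apply Subtype.ext
      simp [map_add])

/-- The degree-zero divisor `{x} - {y}`. -/
def dvsr (x y : P1) : Dvs0 :=
  ⟨Finsupp.single x 1 - Finsupp.single y 1, by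
    rw [AddMonoidHom.mem_ker, map_sub]
    simp [deg, Finsupp.liftAddHom_apply, Finsupp.sum_single_index]⟩

/-- The right action `P ↦ P|γ` of a `2 × 2` matrix `γ = (a b; c d)` on two-variable polynomials,
given by `(P|γ)(X, Y) = P (dX - cY, -bX + aY)`.  On the homogeneous polynomials of degree `k`
this is the right action on `V_k(R)`. -/
def polyAct {R : Type} [CommRing R] (g : Matrix (Fin 2) (Fin 2) R)
    (P : MvPolynomial (Fin 2) R) : MvPolynomial (Fin 2) R :=
  MvPolynomial.aeval
    ![MvPolynomial.C (g 1 1) * MvPolynomial.X 0 - MvPolynomial.C (g 1 0) * MvPolynomial.X 1,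
      MvPolynomial.C (g 0 0) * MvPolynomial.X 1 - MvPolynomial.C (g 0 1) * MvPolynomial.X 0] P

/-- Evaluation of a two-variable polynomial at `(X, Y) = (0, 1)`. -/
def evalXY {R : Type} [CommRing R] (P : MvPolynomial (Fin 2) R) : R :=
  MvPolynomial.eval ![0, 1] P

/-- `x` and `z` lie in the same `Γ₁(N)`-orbit (cusp) of `P¹(ℚ)`. -/
def inOrb (N : ℕ) (x z : P1) : Prop :=
  ∃ γ ∈ CongruenceSubgroup.Gamma1 N, actP1 γ.1 x = z

/-- The Ramanujan tau function: the coefficients of `q ∏ (1 - qⁿ)²⁴`. -/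
def ramanujanTau (n : ℕ) : ℤ :=
  (Polynomial.X * ∏ m ∈ Finset.Icc 1 n, (1 - Polynomial.X ^ m) ^ 24 : Polynomial ℤ).coeff n

/-- A coset representative `(1 j; 0 ℓ)` for the Hecke operator `T_ℓ`. -/
def heckeMat (ℓ j : ℕ) : Matrix (Fin 2) (Fin 2) ℤ := !![1, (j : ℤ); 0, (ℓ : ℤ)]

/-- The coset representative `(ℓ 0; 0 1)` for the Hecke operator `T_ℓ`. -/
def heckeMatInf (ℓ : ℕ) : Matrix (Fin 2) (Fin 2) ℤ := !![(ℓ : ℤ), 0; 0, 1]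

/-- The Hecke operator `T_ℓ` on (level one) modular symbols `Δ⁰ → V_k(R)`. -/
def heckeT {R : Type} [CommRing R] (ℓ : ℕ) (φ : Dvs0 →+ MvPolynomial (Fin 2) R)
    (D : Dvs0) : MvPolynomial (Fin 2) R :=
  (∑ j ∈ Finset.range ℓ,
      polyAct ((heckeMat ℓ j).map (Int.cast : ℤ → R)) (φ (div0Act (heckeMat ℓ j) D)))
    + polyAct ((heckeMatInf ℓ).map (Int.cast : ℤ → R)) (φ (div0Act (heckeMatInf ℓ) D))

instance neZero_pow_succ (p n : ℕ) [hp : Fact p.Prime] : NeZero (p ^ (n + 1)) :=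
  ⟨pow_ne_zero _ hp.out.ne_zero⟩

instance neZero_of_prime (p : ℕ) [hp : Fact p.Prime] : NeZero p := ⟨hp.out.ne_zero⟩

/-- The level-`n` Mazur–Tate element attached to the coefficient data
`c : (ℤ/p^{n+1})^× → R` via the projection `π : (ℤ/p^{n+1})^× ↠ 𝒢ₙ`:
`θ = ∑_a c(a) • σ_{π(a)}` in the group ring `R[𝒢ₙ]`. -/
def MTel {R : Type} [CommRing R] {G : Type} [CommGroup G] (p n : ℕ)
    [NeZero (p ^ (n + 1))] (π : (ZMod (p ^ (n + 1)))ˣ →* G)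
    (c : (ZMod (p ^ (n + 1)))ˣ → R) : MonoidAlgebra R G :=
  ∑ a : (ZMod (p ^ (n + 1)))ˣ, c a • (MonoidAlgebra.of R G (π a))

/-- `F ∈ ℤ_p[𝒢]` has Iwasawa invariants `μ(F) = m` and `λ(F) = l`, computed with respect to the
generator `γ` of `𝒢` (a cyclic group of order `N`), by writing `F = ∑_{i<N} aᵢ Tⁱ` with
`T = γ - 1`: `m` is the minimal `p`-adic valuation of the `aᵢ` and `l` is the first index
where it is attained. -/
def hasMuLambda (p : ℕ) [Fact p.Prime] {G : Type} [CommGroup G] (N : ℕ) (γ : G)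
    (F : MonoidAlgebra ℤ_[p] G) (m l : ℕ) : Prop :=
  ∃ a : ℕ → ℤ_[p],
    F = ∑ i ∈ Finset.range N, a i • (MonoidAlgebra.of ℤ_[p] G γ - 1) ^ i ∧
    (∀ i < N, (p : ℤ_[p]) ^ m ∣ a i) ∧
    (∀ i < l, (p : ℤ_[p]) ^ (m + 1) ∣ a i) ∧
    ¬ (p : ℤ_[p]) ^ (m + 1) ∣ a l

end
noncomputable section
open scoped Classical

/-- The reduction-mod-`p` of the weight-0 Eisenstein boundary symbol
`φ_{0, ω_p^a, 𝟙} = ∑_{x mod p} (ω_p^a)⁻¹(x) φ_{0,x,p}` (evaluated at the polynomial `1`),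
viewed as the function on `P¹(ℚ)` which, at `z`, sums `ω(x)^{p-1-a}` over those
`x ∈ {1, …, p-1}` whose cusp `x/p` contains `z`. -/
def phiE (p : ℕ) [Fact p.Prime] (ω : ℤ → ℤ_[p]) (a : ℕ) (z : P1) : ℤ_[p] :=
  ∑ x ∈ Finset.Ico 1 p,
    if inOrb p (ratPt ((x : ℚ) / (p : ℚ))) z then ω (x : ℤ) ^ (p - 1 - a) else 0

/-- The boundary symbol `φ₉ ∈ Hom_{Γ₁(27)}(Δ, ℤ/9ℤ)`, constant on `Γ₁(27)`-cusps, with the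
explicit values from the paper. -/
def phi9 (z : P1) : ZMod 9 :=
  if inOrb 27 (ratPt (1/9)) z ∨ inOrb 27 (ratPt (8/27)) z ∨ inOrb 27 (ratPt (10/27)) z ∨
     inOrb 27 (ratPt (8/9)) z ∨ inOrb 27 inftyPt z then 0
  else if inOrb 27 (ratPt 0) z ∨ inOrb 27 (ratPt (1/12)) z ∨ inOrb 27 (ratPt (1/10)) z ∨
     inOrb 27 (ratPt (1/8)) z ∨ inOrb 27 (ratPt (5/12)) z then 1
  else if inOrb 27 (ratPt (2/27)) z ∨ inOrb 27 (ratPt (2/9)) z ∨ inOrb 27 (ratPt (7/27)) z ∨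
     inOrb 27 (ratPt (11/27)) z ∨ inOrb 27 (ratPt (7/9)) z then 3
  else if inOrb 27 (ratPt (1/11)) z ∨ inOrb 27 (ratPt (1/7)) z ∨ inOrb 27 (ratPt (1/3)) z ∨
     inOrb 27 (ratPt (1/2)) z ∨ inOrb 27 (ratPt (2/3)) z then 4
  else if inOrb 27 (ratPt (4/27)) z ∨ inOrb 27 (ratPt (5/27)) z ∨ inOrb 27 (ratPt (4/9)) z ∨
     inOrb 27 (ratPt (13/27)) z ∨ inOrb 27 (ratPt (5/9)) z then 6
  else if inOrb 27 (ratPt (1/13)) z ∨ inOrb 27 (ratPt (1/6)) z ∨ inOrb 27 (ratPt (1/5)) z ∨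
     inOrb 27 (ratPt (1/4)) z ∨ inOrb 27 (ratPt (5/6)) z then 7
  else 0

end

/-!
At a cusp `A/P` (`A`, `P` coprime, `p ∣ P`) the symbol sums `ω(x)²` over the `x ∈ (ℤ/p)ˣ` with
`x/p ~ A/P` under `Γ₁(p)`, and these are exactly `x ≡ ±A`. So `φ(∞) = 2`,
`φ(a/p^{n+1}) = 2ω(a)²` and `θ = ∑ₐ (2 - 2ω(a)²) σₐ`. The character `ω²` is nontrivial on the
kernel of `(ℤ/p^{n+1})ˣ ↠ 𝒢ₙ` (at `2^{pⁿ}` it is `≡ 4 ≢ 1`), so its part vanishes and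
`θ = 2(p - 1) ∑_{g ∈ 𝒢ₙ} g = 2(p - 1) ∑_{j < pⁿ} γʲ = 2(p - 1) ∑_{i < pⁿ} C(pⁿ, i + 1) Tⁱ`.
All these binomial coefficients except the last one, `C(pⁿ, pⁿ) = 1`, are divisible by `p`, and
`2(p - 1)` is a `p`-adic unit.
-/

theorem IsCoprime.eq_or_eq_neg_of_mul_eq_mul {a c b d : ℤ} (hac : IsCoprime a c)
    (hbd : IsCoprime b d) (h : a * d = c * b) : (b = a ∧ d = c) ∨ (b = -a ∧ d = -c) := by
  obtain ⟨s, t, hst⟩ := hac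
  obtain ⟨s', t', hst'⟩ := hbd
  set k := s * b + t * d
  have hb : b = k * a := by linear_combination (-b) * hst - t * h
  have hd : d = k * c := by linear_combination (-d) * hst + s * h
  have hk : IsUnit k := IsUnit.of_mul_eq_one (s' * a + t' * c) <| by
    linear_combination hst' - s' * hb - t' * hd
  rcases Int.isUnit_iff.1 hk with hk | hk <;> rw [hk] at hb hd
  · exact .inl ⟨by simpa using hb, by simpa using hd⟩
  · exact .inr ⟨by simpa using hb, by simpa using hd⟩

open Matrix in
theorem IsCoprime.sl2_apply {a c : ℤ} (h : IsCoprime a c) (γ : SpecialLinearGroup (Fin 2) ℤ) :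
    IsCoprime (γ 0 0 * a + γ 0 1 * c) (γ 1 0 * a + γ 1 1 * c) := by
  obtain ⟨s, t, hst⟩ := h
  have hdet : γ 0 0 * γ 1 1 - γ 0 1 * γ 1 0 = 1 := by rw [← det_fin_two, γ.det_coe]
  exact ⟨s * γ 1 1 - t * γ 1 0, t * γ 0 0 - s * γ 0 1,
    by linear_combination hst + (s * a + t * c) * hdet⟩

def intPt (a c : ℤ) (h : IsCoprime a c) : P1 :=
  Projectivization.mk ℚ ![(a : ℚ), c] fun h0 => not_isCoprime_zero_zero <| by
    have h₀ := congrFun h0 0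
    have h₁ := congrFun h0 1
    simp only [Matrix.cons_val_zero, Matrix.cons_val_one, Pi.zero_apply, Int.cast_eq_zero]
      at h₀ h₁
    rwa [h₀, h₁] at h

theorem intPt_eq_intPt_iff {a c b d : ℤ} (hac : IsCoprime a c) (hbd : IsCoprime b d) :
    intPt a c hac = intPt b d hbd ↔ (b = a ∧ d = c) ∨ (b = -a ∧ d = -c) := by
  refine ⟨fun h => hac.eq_or_eq_neg_of_mul_eq_mul hbd ?_, ?_⟩
  · obtain ⟨q, hq⟩ := (Projectivization.mk_eq_mk_iff' ℚ _ _ _ _).1 h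
    have h₀ := congrFun hq 0
    have h₁ := congrFun hq 1
    simp only [Matrix.cons_val_zero, Matrix.cons_val_one, Pi.smul_apply, smul_eq_mul] at h₀ h₁
    exact_mod_cast (show (a : ℚ) * d = c * b by rw [← h₀, ← h₁]; ring)
  · rintro (⟨rfl, rfl⟩ | ⟨rfl, rfl⟩)
    · rfl
    · refine (Projectivization.mk_eq_mk_iff' ℚ _ _ _ _).2 ⟨-1, ?_⟩
      ext i; fin_cases i <;> simp

theorem ratPt_div_eq_intPt {a c : ℤ} (h : IsCoprime a c) (hc : c ≠ 0) :
    ratPt (a / c) = intPt a c h := by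
  refine (Projectivization.mk_eq_mk_iff' ℚ _ _ _ _).2 ⟨(c : ℚ)⁻¹, ?_⟩
  ext i; fin_cases i <;> simp [div_eq_inv_mul, hc]

theorem inftyPt_eq_intPt : inftyPt = intPt 1 0 isCoprime_one_left := by
  refine (Projectivization.mk_eq_mk_iff' ℚ _ _ _ _).2 ⟨1, ?_⟩
  ext i; fin_cases i <;> simp

theorem actP1_intPt (γ : Matrix.SpecialLinearGroup (Fin 2) ℤ) {a c : ℤ} (h : IsCoprime a c) :
    actP1 γ (intPt a c h) =
      intPt (γ 0 0 * a + γ 0 1 * c) (γ 1 0 * a + γ 1 1 * c) (h.sl2_apply γ) := by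
  have hdet : ((γ : Matrix (Fin 2) (Fin 2) ℤ).map ((↑) : ℤ → ℚ)).det ≠ 0 := by
    rw [← Int.cast_det, γ.det_coe]; exact one_ne_zero
  rw [actP1, dif_pos hdet, intPt, intPt, Projectivization.map_mk]
  congr 1
  ext i; fin_cases i <;> simp [Matrix.mulVec, dotProduct, Fin.sum_univ_two]

theorem exists_mem_Gamma1_apply_eq (N : ℕ) {a c b d : ℤ} (hac : IsCoprime a c)
    (hbd : IsCoprime b d) (hc : (N : ℤ) ∣ c) (hd : (N : ℤ) ∣ d) (hab : (a : ZMod N) = b) :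
    ∃ γ ∈ CongruenceSubgroup.Gamma1 N,
      γ 0 0 * a + γ 0 1 * c = b ∧ γ 1 0 * a + γ 1 1 * c = d := by
  obtain ⟨s, t, hst⟩ := hac
  obtain ⟨s', t', hst'⟩ := hbd
  -- `γ` is `(b -t'; d s') (s t; -c a)`, which sends `(a, c)` to `(1, 0)` and then to `(b, d)`
  let γ : Matrix.SpecialLinearGroup (Fin 2) ℤ :=
    ⟨!![b * s + t' * c, b * t - t' * a; d * s - s' * c, d * t + s' * a], by
      rw [Matrix.det_fin_two_of]; linear_combination (s' * b + t' * d) * hst + hst'⟩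
  have hc' : (c : ZMod N) = 0 := (ZMod.intCast_zmod_eq_zero_iff_dvd c N).2 hc
  have hd' : (d : ZMod N) = 0 := (ZMod.intCast_zmod_eq_zero_iff_dvd d N).2 hd
  have hst₁ : (s : ZMod N) * a + t * c = 1 := by exact_mod_cast congrArg (↑· : ℤ → ZMod N) hst
  have hst₂ : (s' : ZMod N) * b + t' * d = 1 := by exact_mod_cast congrArg (↑· : ℤ → ZMod N) hst'
  refine ⟨γ, (CongruenceSubgroup.Gamma1_mem N γ).2 ⟨?_, ?_, ?_⟩, ?_, ?_⟩ <;>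
    simp only [γ, Matrix.of_apply, Matrix.cons_val', Matrix.cons_val_zero, Matrix.cons_val_one,
      Matrix.empty_val', Matrix.cons_val_fin_one] <;>
    push_cast
  · linear_combination hst₁ + s * hab.symm + t' * hc' - t * hc'
  · linear_combination hst₂ + s' * hab - t' * hd' + t * hd'
  · linear_combination s * hd' - s' * hc'
  · linear_combination b * hst
  · linear_combination d * hst

theorem inOrb_intPt_iff (N : ℕ) {a c b d : ℤ} (hac : IsCoprime a c) (hbd : IsCoprime b d)
    (hc : (N : ℤ) ∣ c) (hd : (N : ℤ) ∣ d) :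
    inOrb N (intPt a c hac) (intPt b d hbd) ↔ (a : ZMod N) = b ∨ (a : ZMod N) = -b := by
  constructor
  · rintro ⟨γ, hγ, hγac⟩
    obtain ⟨hγ₀₀, -, -⟩ := (CongruenceSubgroup.Gamma1_mem N γ).1 hγ
    have hc' : (c : ZMod N) = 0 := (ZMod.intCast_zmod_eq_zero_iff_dvd c N).2 hc
    have hγa : ((γ 0 0 * a + γ 0 1 * c : ℤ) : ZMod N) = a := by
      push_cast; rw [hγ₀₀, hc']; ring
    rw [actP1_intPt, intPt_eq_intPt_iff] at hγac
    rcases hγac with ⟨hb, -⟩ | ⟨hb, -⟩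
    · exact .inl (by rw [← hγa, hb])
    · exact .inr (by rw [← hγa, ← neg_eq_iff_eq_neg.2 hb]; push_cast; ring)
  · rintro (hab | hab)
    · obtain ⟨γ, hγ, hb, hd⟩ := exists_mem_Gamma1_apply_eq N hac hbd hc hd hab
      exact ⟨γ, hγ, by rw [actP1_intPt]; congr⟩
    · obtain ⟨γ, hγ, hb, hd⟩ := exists_mem_Gamma1_apply_eq N hac hbd.neg_neg hc hd.neg_right
        (by push_cast; exact hab)
      refine ⟨γ, hγ, ?_⟩
      rw [actP1_intPt, intPt_eq_intPt_iff]
      exact .inr ⟨by rw [hb, neg_neg], by rw [hd, neg_neg]⟩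

namespace PadicInt

variable {p : ℕ} [Fact p.Prime]

/-- Teichmüller representatives are determined by their residues: if `x ≠ y` then
`x ^ p - y ^ p = (x - y) * ∑ xⁱ y^(p-1-i)` and the sum is `≡ p x^(p-1) ≡ 0 ≢ 1`. -/
theorem eq_of_pow_eq_self_of_toZMod_eq {x y : ℤ_[p]} (hx : x ^ p = x) (hy : y ^ p = y)
    (h : toZMod x = toZMod y) : x = y := by
  have hgeom : (∑ i ∈ Finset.range p, x ^ i * y ^ (p - 1 - i) - 1) * (x - y) = 0 := by
    rw [sub_mul, geom_sum₂_mul, hx, hy, one_mul, sub_self]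
  refine sub_eq_zero.1 ((mul_eq_zero.1 hgeom).resolve_left fun hsum => ?_)
  have := congrArg toZMod hsum
  rw [map_sub, map_one, map_sum, map_zero, sub_eq_zero] at this
  have hterm : ∀ i ∈ Finset.range p, toZMod (x ^ i * y ^ (p - 1 - i)) = toZMod x ^ (p - 1) := by
    intro i hi
    rw [map_mul, map_pow, map_pow, ← h, ← pow_add]
    congr 1
    have := Finset.mem_range.1 hi
    omega
  rw [Finset.sum_congr rfl hterm, Finset.sum_const, Finset.card_range, nsmul_eq_mul,
    ZMod.natCast_self, zero_mul] at this
  exact zero_ne_one this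

theorem exists_monoidHom_of_toZMod_eq_of_pow_eq_self {ω : ℤ → ℤ_[p]}
    (hω_cong : ∀ m : ℤ, toZMod (ω m) = m) (hω_teich : ∀ m : ℤ, ω m ^ p = ω m) :
    ∃ χ : ZMod p →* ℤ_[p], ω = (fun m : ℤ => χ m) ∧ ∀ x, toZMod (χ x) = x := by
  have hω : ∀ {m m' : ℤ}, (m : ZMod p) = m' → ω m = ω m' := fun h =>
    eq_of_pow_eq_self_of_toZMod_eq (hω_teich _) (hω_teich _) (by rw [hω_cong, hω_cong, h])
  refine ⟨⟨⟨fun x => ω x.val, ?_⟩, fun x y => ?_⟩, funext fun m => hω (by simp), fun x => ?_⟩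
  · exact eq_of_pow_eq_self_of_toZMod_eq (hω_teich _) (one_pow p) (by simp [hω_cong])
  · exact eq_of_pow_eq_self_of_toZMod_eq (hω_teich _) (by rw [mul_pow, hω_teich, hω_teich])
      (by simp [hω_cong])
  · simp [hω_cong]

theorem natCast_dvd_natCast_iff {k : ℕ} : (p : ℤ_[p]) ∣ k ↔ p ∣ k := by
  simpa [Int.natCast_dvd_natCast] using pow_p_dvd_int_iff (p := p) 1 k

end PadicInt

theorem sum_Ico_one_natCast_eq_sum_ne_zero {M : Type*} [AddCommMonoid M] (N : ℕ) [NeZero N]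
    (f : ZMod N → M) :
    ∑ x ∈ Finset.Ico 1 N, f x = ∑ y ∈ Finset.univ.erase (0 : ZMod N), f y := by
  refine Finset.sum_nbij' (fun x => x) ZMod.val (fun x hx => ?_) (fun y hy => ?_)
    (fun x hx => ?_) (fun y _ => ZMod.natCast_zmod_val y) (fun _ _ => rfl)
  · obtain ⟨h1, hN⟩ := Finset.mem_Ico.1 hx
    simp only [Finset.mem_erase, Finset.mem_univ, and_true, ne_eq]
    rw [← ZMod.val_eq_zero, ZMod.val_natCast_of_lt hN]
    omega
  · simp only [Finset.mem_erase, Finset.mem_univ, and_true, ne_eq, ← ZMod.val_eq_zero] at hy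
    exact Finset.mem_Ico.2 ⟨Nat.one_le_iff_ne_zero.2 hy, ZMod.val_lt y⟩
  · exact ZMod.val_natCast_of_lt (Finset.mem_Ico.1 hx).2

theorem ZMod.intCast_ne_zero_of_isCoprime {p : ℕ} [Fact p.Prime] {A P : ℤ} (h : IsCoprime A P)
    (hP : (p : ℤ) ∣ P) : (A : ZMod p) ≠ 0 := fun hA => by
  have := h.isUnit_of_dvd' ((ZMod.intCast_zmod_eq_zero_iff_dvd A p).1 hA) hP
  exact (Fact.out : p.Prime).one_lt.ne' (by exact_mod_cast Int.isUnit_iff_natAbs_eq.1 this)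

theorem ZMod.sum_ne_zero_ite_eq_or_eq_neg {M : Type*} [AddCommMonoid M] {p : ℕ} [Fact p.Prime]
    (hp : p ≠ 2) (f : ZMod p → M) {a : ZMod p} (ha : a ≠ 0) :
    ∑ y ∈ Finset.univ.erase 0, (if y = a ∨ y = -a then f y else 0) = f a + f (-a) := by
  have hneg : a ≠ -a := fun h => ha <| by
    have : (2 : ZMod p) * a = 0 := by linear_combination h
    exact (mul_eq_zero.1 this).resolve_left (Ring.two_ne_zero (by rwa [ZMod.ringChar_zmod_n]))
  have hfilter : (Finset.univ.erase 0).filter (fun y => y = a ∨ y = -a) = {a, -a} := by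
    ext y
    simp only [Finset.mem_filter, Finset.mem_erase, Finset.mem_insert, Finset.mem_singleton]
    refine ⟨fun h => h.2, ?_⟩
    rintro (rfl | rfl)
    · exact ⟨⟨ha, Finset.mem_univ _⟩, .inl rfl⟩
    · exact ⟨⟨neg_ne_zero.2 ha, Finset.mem_univ _⟩, .inr rfl⟩
  rw [← Finset.sum_filter, hfilter, Finset.sum_pair hneg]

theorem MonoidHom.map_neg_sq {R S : Type*} [Ring R] [Monoid S] (χ : R →* S) (x : R) :
    χ (-x) ^ 2 = χ x ^ 2 := by
  rw [← map_pow, neg_sq, map_pow]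

theorem phiE_intPt {p : ℕ} [Fact p.Prime] (hp : p ≠ 2) (χ : ZMod p →* ℤ_[p]) (k : ℕ)
    {A P : ℤ} (h : IsCoprime A P) (hP : (p : ℤ) ∣ P) :
    phiE p (fun m => χ m) k (intPt A P h) = χ A ^ (p - 1 - k) + χ (-A) ^ (p - 1 - k) := by
  classical
  have hterm : ∀ x ∈ Finset.Ico 1 p,
      (if inOrb p (ratPt ((x : ℚ) / p)) (intPt A P h) then χ ((x : ℤ) : ZMod p) ^ (p - 1 - k)
        else 0) =
      if (x : ZMod p) = A ∨ (x : ZMod p) = -A then χ x ^ (p - 1 - k) else 0 := by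
    intro x hx
    obtain ⟨hx1, hxp⟩ := Finset.mem_Ico.1 hx
    have hxcop : IsCoprime (x : ℤ) p := by
      rw [Nat.isCoprime_iff_coprime, Nat.coprime_comm, (Fact.out : p.Prime).coprime_iff_not_dvd]
      exact Nat.not_dvd_of_pos_of_lt hx1 hxp
    have hpt : ratPt ((x : ℚ) / p) = intPt x p hxcop := by
      have := ratPt_div_eq_intPt hxcop (by exact_mod_cast (Fact.out : p.Prime).ne_zero)
      rwa [Int.cast_natCast, Int.cast_natCast] at this
    rw [hpt, inOrb_intPt_iff p hxcop h dvd_rfl hP]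
    push_cast
    rfl
  rw [phiE, Finset.sum_congr rfl hterm,
    sum_Ico_one_natCast_eq_sum_ne_zero p
      (fun y => if y = A ∨ y = -A then χ y ^ (p - 1 - k) else 0),
    ZMod.sum_ne_zero_ite_eq_or_eq_neg hp _ (ZMod.intCast_ne_zero_of_isCoprime h hP)]

theorem phiE_inftyPt_sub_phiE_ratPt {p : ℕ} [Fact p.Prime] (hp : p ≠ 2) (χ : ZMod p →* ℤ_[p])
    {k : ℕ} (hk : p - 1 - k = 2) (n : ℕ) (a : (ZMod (p ^ (n + 1)))ˣ) :
    phiE p (fun m => χ m) k inftyPt -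
        phiE p (fun m => χ m) k (ratPt (((a : ZMod (p ^ (n + 1))).val : ℚ) / (p : ℚ) ^ (n + 1))) =
      2 - 2 * χ (a : ZMod (p ^ (n + 1))).val ^ 2 := by
  have hcop : IsCoprime ((a : ZMod (p ^ (n + 1))).val : ℤ) ((p : ℤ) ^ (n + 1)) := by
    exact_mod_cast Nat.isCoprime_iff_coprime.2 (ZMod.val_coe_unit_coprime a)
  have hpt := ratPt_div_eq_intPt hcop
    (pow_ne_zero _ (by exact_mod_cast (Fact.out : p.Prime).ne_zero))
  push_cast at hpt
  rw [hpt, inftyPt_eq_intPt, phiE_intPt hp χ k _ (dvd_zero _),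
    phiE_intPt hp χ k _ (dvd_pow_self _ n.succ_ne_zero), hk,
    χ.map_neg_sq, χ.map_neg_sq, Int.cast_one, map_one]
  push_cast
  ring

theorem MonoidHom.sum_smul_comp_eq_zero {U G R M : Type*} [Group U] [Fintype U] [Monoid G]
    [Ring R] [IsDomain R] [AddCommGroup M] [Module R M] [Module.IsTorsionFree R M] (π : U →* G)
    (χ : U →* R) {t : U} (ht : π t = 1) (hχt : χ t ≠ 1) (f : G → M) : ∑ a, χ a • f (π a) = 0 := by
  have hinv : ∑ a, χ a • f (π a) = χ t • ∑ a, χ a • f (π a) := by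
    rw [Finset.smul_sum, ← Equiv.sum_comp (Equiv.mulLeft t)]
    simp [ht, mul_smul]
  have : (χ t - 1) • ∑ a, χ a • f (π a) = 0 := by rw [sub_smul, one_smul, ← hinv, sub_self]
  exact (smul_eq_zero.1 this).resolve_left (sub_ne_zero.2 hχt)

theorem MonoidHom.sum_comp_eq_card_fiber_smul {U G M : Type*} [Group U] [Fintype U] [Group G]
    [Fintype G] [DecidableEq G] [AddCommMonoid M] {π : U →* G} (hπ : Function.Surjective π)
    (f : G → M) : ∑ a, f (π a) = (Finset.univ.filter fun a => π a = 1).card • ∑ g, f g := by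
  rw [Finset.sum_comp, Finset.image_univ_of_surjective hπ, Finset.smul_sum]
  exact Finset.sum_congr rfl fun g _ => by
    rw [MonoidHom.card_fiber_eq_of_mem_range π (hπ g) (hπ 1)]

theorem MonoidHom.card_eq_card_fiber_mul_card {U G : Type*} [Group U] [Fintype U] [Group G]
    [Fintype G] [DecidableEq G] {π : U →* G} (hπ : Function.Surjective π) :
    Fintype.card U = (Finset.univ.filter fun a => π a = 1).card * Fintype.card G := by
  simpa using MonoidHom.sum_comp_eq_card_fiber_smul hπ (fun _ => (1 : ℕ))

theorem card_fiber_one_eq_of_card_eq {p : ℕ} [Fact p.Prime] {n : ℕ} {G : Type*} [Group G]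
    [Fintype G] [DecidableEq G] (hG : Fintype.card G = p ^ n) {π : (ZMod (p ^ (n + 1)))ˣ →* G}
    (hπ : Function.Surjective π) : (Finset.univ.filter fun a => π a = 1).card = p - 1 := by
  have := MonoidHom.card_eq_card_fiber_mul_card hπ
  rw [ZMod.card_units_eq_totient, Nat.totient_prime_pow_succ Fact.out, hG, mul_comm] at this
  exact (Nat.eq_of_mul_eq_mul_right (pow_pos (Fact.out : p.Prime).pos n) this).symm

/-- `a ↦ χ(a)²` is a character of `(ℤ/p^{n+1})ˣ` that is nontrivial on the kernel of `π`:
it takes the value `χ(2)² ≡ 4 ≢ 1` at `2^(pⁿ)`. -/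
theorem sum_map_sq_smul_eq_zero {p : ℕ} [Fact p.Prime] (hp2 : p ≠ 2) (hp3 : p ≠ 3)
    (χ : ZMod p →* ℤ_[p]) (hχ : ∀ x, PadicInt.toZMod (χ x) = x) {n : ℕ} {G : Type*} [Group G]
    [Fintype G] (hG : Fintype.card G = p ^ n) (π : (ZMod (p ^ (n + 1)))ˣ →* G) {M : Type*}
    [AddCommGroup M] [Module ℤ_[p] M] [Module.IsTorsionFree ℤ_[p] M] (f : G → M) :
    ∑ a : (ZMod (p ^ (n + 1)))ˣ, χ (a : ZMod (p ^ (n + 1))).val ^ 2 • f (π a) = 0 := by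
  let red : ZMod (p ^ (n + 1)) →+* ZMod p := ZMod.castHom (dvd_pow_self p n.succ_ne_zero) _
  let ψ : (ZMod (p ^ (n + 1)))ˣ →* ℤ_[p] :=
    (powMonoidHom 2).comp (χ.comp (red.toMonoidHom.comp (Units.coeHom _)))
  let t : (ZMod (p ^ (n + 1)))ˣ := ZMod.unitOfCoprime 2
    (((Nat.coprime_primes Nat.prime_two Fact.out).2 hp2.symm).pow_right _) ^ p ^ n
  have hπt : π t = 1 := by rw [map_pow, ← hG, pow_card_eq_one]
  have hψt : ψ t ≠ 1 := fun h => by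
    have h4 := congrArg PadicInt.toZMod h
    simp only [ψ, t, MonoidHom.comp_apply, Units.coeHom_apply, ZMod.coe_unitOfCoprime, map_pow,
      powMonoidHom_apply, hχ, map_one] at h4
    change ((red 2) ^ 2) ^ p ^ n = 1 at h4
    rw [map_ofNat, ZMod.pow_card_pow] at h4
    have h3 : ((3 : ℕ) : ZMod p) = 0 := by push_cast; linear_combination h4
    exact hp3 ((Nat.prime_dvd_prime_iff_eq Fact.out Nat.prime_three).1
      ((ZMod.natCast_eq_zero_iff 3 p).1 h3))
  simpa [ψ, red, ZMod.natCast_val] using π.sum_smul_comp_eq_zero ψ hπt hψt f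

theorem MTel_phiE_eq_smul_sum_of {p : ℕ} [Fact p.Prime] (hp2 : p ≠ 2) (hp3 : p ≠ 3)
    (χ : ZMod p →* ℤ_[p]) (hχ : ∀ x, PadicInt.toZMod (χ x) = x) {k : ℕ} (hk : p - 1 - k = 2)
    (n : ℕ) {G : Type} [CommGroup G] [Fintype G] (hG : Fintype.card G = p ^ n)
    {π : (ZMod (p ^ (n + 1)))ˣ →* G} (hπ : Function.Surjective π) :
    MTel p n π (fun a => phiE p (fun m => χ m) k inftyPt -
        phiE p (fun m => χ m) k (ratPt (((a : ZMod (p ^ (n + 1))).val : ℚ) / (p : ℚ) ^ (n + 1)))) =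
      ((2 * (p - 1) : ℕ) : ℤ_[p]) • ∑ g, MonoidAlgebra.of ℤ_[p] G g := by
  classical
  simp only [MTel, phiE_inftyPt_sub_phiE_ratPt hp2 χ hk, sub_smul, mul_smul,
    Finset.sum_sub_distrib, ← Finset.smul_sum, sum_map_sq_smul_eq_zero hp2 hp3 χ hχ hG,
    smul_zero, sub_zero, MonoidHom.sum_comp_eq_card_fiber_smul hπ,
    card_fiber_one_eq_of_card_eq hG hπ]
  rw [← Nat.cast_smul_eq_nsmul ℤ_[p] (p - 1), smul_smul, Nat.cast_mul, Nat.cast_ofNat]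

theorem Fintype.sum_eq_sum_range_pow {G M : Type*} [Group G] [Fintype G] [AddCommMonoid M]
    {γ : G} (hγ : orderOf γ = Fintype.card G) (f : G → M) :
    ∑ g, f g = ∑ j ∈ Finset.range (orderOf γ), f (γ ^ j) := by
  classical
  have hinj : Set.InjOn (γ ^ ·) (Finset.range (orderOf γ)) := fun i hi j hj hij =>
    pow_injOn_Iio_orderOf (by simpa using hi) (by simpa using hj) hij
  have himage : (Finset.range (orderOf γ)).image (γ ^ ·) = Finset.univ :=
    Finset.eq_univ_of_card _ (by rw [Finset.card_image_of_injOn hinj, Finset.card_range, hγ])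
  rw [← himage, Finset.sum_image hinj]

theorem geom_sum_eq_sum_choose_mul_sub_one_pow {R : Type*} [CommRing R] (x : R) (N : ℕ) :
    ∑ j ∈ Finset.range N, x ^ j =
      ∑ i ∈ Finset.range N, (N.choose (i + 1) : R) * (x - 1) ^ i := by
  simpa [Polynomial.eval_finsetSum] using
    congrArg (Polynomial.eval (x - 1)) (Polynomial.geom_sum_X_comp_X_add_one_eq_sum (R := R) N)

theorem hasMuLambda_smul_sum_of {p : ℕ} [Fact p.Prime] {G : Type} [CommGroup G] [Fintype G]
    {n : ℕ} (hG : Fintype.card G = p ^ n) {γ : G} (hγ : orderOf γ = p ^ n) {c : ℤ_[p]}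
    (hc : ¬ (p : ℤ_[p]) ∣ c) :
    hasMuLambda p (p ^ n) γ (c • ∑ g, MonoidAlgebra.of ℤ_[p] G g) 0 (p ^ n - 1) := by
  have hpos : 0 < p ^ n := pow_pos (Fact.out : p.Prime).pos n
  refine ⟨fun i => c * (p ^ n).choose (i + 1), ?_, fun _ _ => by simp, fun i hi => ?_, ?_⟩
  · simp_rw [Fintype.sum_eq_sum_range_pow (hγ.trans hG.symm), hγ, map_pow,
      geom_sum_eq_sum_choose_mul_sub_one_pow, Finset.smul_sum]
    refine Finset.sum_congr rfl fun i _ => ?_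
    rw [mul_smul, Nat.cast_smul_eq_nsmul, nsmul_eq_mul]
  · rw [zero_add, pow_one]
    refine dvd_mul_of_dvd_right (Nat.cast_dvd_cast ((Fact.out : p.Prime).dvd_choose_pow ?_ ?_)) c
    all_goals omega
  · dsimp only
    rwa [zero_add, pow_one, Nat.sub_add_cancel (Nat.one_le_of_lt hpos), Nat.choose_self,
      Nat.cast_one, mul_one]

theorem lambda_of_mazur_tate_eisenstein_general
    (p : ℕ) [Fact p.Prime] (hp : p = 5 ∨ p = 7)
    (ω : ℤ → ℤ_[p])
    (hω_cong : ∀ m : ℤ, PadicInt.toZMod (ω m) = (m : ZMod p))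
    (hω_teich : ∀ m : ℤ, ω m ^ p = ω m)
    (n : ℕ)
    (G : Type) [CommGroup G] [Fintype G] (hG : Fintype.card G = p ^ n)
    (π : (ZMod (p ^ (n + 1)))ˣ →* G) (hπ : Function.Surjective π) :
    ∀ γ : G, orderOf γ = p ^ n →
      ∃ m : ℕ, hasMuLambda p (p ^ n) γ
        (MTel p n π (fun a =>
          phiE p ω (if p = 5 then 2 else 4) inftyPt -
            phiE p ω (if p = 5 then 2 else 4)
              (ratPt (((a : ZMod (p ^ (n + 1))).val : ℚ) / (p : ℚ) ^ (n + 1)))))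
        m (p ^ n - 1) := by
  intro γ hγ
  obtain ⟨χ, rfl, hχ⟩ := PadicInt.exists_monoidHom_of_toZMod_eq_of_pow_eq_self hω_cong hω_teich
  have hk : p - 1 - (if p = 5 then 2 else 4) = 2 := by rcases hp with rfl | rfl <;> rfl
  have hp5 : 5 ≤ p := by omega
  refine ⟨0, ?_⟩
  rw [MTel_phiE_eq_smul_sum_of (by omega) (by omega) χ hχ hk n hG hπ]
  refine hasMuLambda_smul_sum_of hG hγ fun hdvd => ?_
  rcases (Nat.Prime.dvd_mul Fact.out).1 (PadicInt.natCast_dvd_natCast_iff.1 hdvd) with h | h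
  · exact absurd (Nat.le_of_dvd two_pos h) (by omega)
  · exact absurd (Nat.le_of_dvd (by omega) h) (by omega)

/-- Theorem B: let `p ∈ {5, 7}` and let `θ_{n,p}` denote the level-`n` `p`-adic Mazur–Tate
element attached to (the boundary symbol of) the Eisenstein series `E_p`, where
`E_5 = E_{2, ω_5², 𝟙}` and `E_7 = E_{2, ω_7⁴, 𝟙}`.  Then for every `n ≥ 1`,
`λ(θ_{n,p}) = pⁿ - 1` (computed with respect to any generator `γ` of `𝒢ₙ`).
Here `ω` is the Teichmüller character mod `p`, characterized by `ω(m) ≡ m (mod p)` together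
with its values being Teichmüller representatives (`ω(m)^p = ω(m)`). -/
theorem lambda_of_mazur_tate_eisenstein
    (p : ℕ) [Fact p.Prime] (hp : p = 5 ∨ p = 7)
    (ω : ℤ → ℤ_[p])
    (hω_cong : ∀ m : ℤ, PadicInt.toZMod (ω m) = (m : ZMod p))
    (hω_teich : ∀ m : ℤ, ω m ^ p = ω m)
    (n : ℕ) (hn : 1 ≤ n)
    (G : Type) [CommGroup G] [Fintype G] (hG : Fintype.card G = p ^ n)
    (π : (ZMod (p ^ (n + 1)))ˣ →* G) (hπ : Function.Surjective π) :
    ∀ γ : G, orderOf γ = p ^ n →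
      ∃ m : ℕ, hasMuLambda p (p ^ n) γ
        (MTel p n π (fun a =>
          phiE p ω (if p = 5 then 2 else 4) inftyPt -
            phiE p ω (if p = 5 then 2 else 4)
              (ratPt (((a : ZMod (p ^ (n + 1))).val : ℚ) / (p : ℚ) ^ (n + 1)))))
        m (p ^ n - 1) :=
  lambda_of_mazur_tate_eisenstein_general p hp ω hω_cong hω_teich n G hG π hπ
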